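/- arXiv:1603.01535 — 2 statements merged into one kernel-verified Lean document; each statement's English description precedes it below -/
import Mathlib

section
/- Let T : ℓ∞²(ℂ) × ℓ∞²(ℂ) → ℂ be the bilinear form T(z,w) = Σ_{i,j=1}^{2} a_{ij} z_i w_j with real coefficients a_{ij}. Suppose it is NOT the case that all four coefficients are nonzero with a₁₁a₂₁/(a₁₂a₂₂) < 0 and |(a₁₁²a₂₁²/(a₁₂²a₂₂²))(a₁₂²+a₂₂²) − (a₁₁²+a₂₁²)| ≤ |2a₁₁a₂₁(1 − a₁₁a₂₁/(a₁₂a₂₂))|. Then ‖T‖ = max{ |a₁₁+a₂₁| + |a₁₂+a₂₂| , |a₁₁−a₂₁| + |a₁₂−a₂₂| }. -/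
/-!
For fixed `z`, `w ↦ T z w` is a functional on `ℓ∞²(ℂ)`, so its norm is the `ℓ¹` norm
`‖a11 z₀ + a21 z₁‖ + ‖a12 z₀ + a22 z₁‖` of its coefficients. For `‖z‖ ≤ 1` this is at most
`f t = √(a11² + a21² + 2 a11 a21 t) + √(a12² + a22² + 2 a12 a22 t)` with `t = Re (z₀ conj z₁)`
in `[-1, 1]`, and `f (±1)` are the two candidate values, attained at `z = (1, ±1)`.
The function `f` is concave. If `a11 a21` and `a12 a22` do not have strictly opposite signs, both
summands are monotone in the same direction. Otherwise the negation of condition (A), with the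
denominators cleared, says that `f' 1 ≥ 0` or `f' (-1) ≤ 0`, and the tangent line of `f` at that
endpoint bounds `f` by its value there.
-/

open Real Set ComplexConjugate

theorem mul_sqrt_add_mul_sqrt_nonneg {B D x y : ℝ} (hB : 0 ≤ B) (h : D ^ 2 * x ≤ B ^ 2 * y) :
    0 ≤ B * √y + D * √x := by
  have : |D| * √x ≤ B * √y := by
    rw [← sqrt_sq_eq_abs, ← sqrt_mul (sq_nonneg D), ← abs_of_nonneg hB, ← sqrt_sq_eq_abs,
      ← sqrt_mul (sq_nonneg B)]
    exact sqrt_le_sqrt h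
  linarith [mul_le_mul_of_nonneg_right (neg_abs_le D) (sqrt_nonneg x)]

theorem sqrt_add_sqrt_le_of_slope_nonneg {A B C D t : ℝ} (ht : t ≤ 1)
    (hu : 0 ≤ A + B * t) (hv : 0 ≤ C + D * t)
    (hx : 0 < A + B) (hy : 0 < C + D) (hslope : 0 ≤ B * √(C + D) + D * √(A + B)) :
    √(A + B * t) + √(C + D * t) ≤ √(A + B) + √(C + D) := by
  have hsx := sqrt_pos.2 hx
  have hsy := sqrt_pos.2 hy
  -- tangent lines of the concave function `√` at `A + B` and at `C + D`
  have tx := two_mul_le_add_sq (√(A + B)) (√(A + B * t))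
  have ty := two_mul_le_add_sq (√(C + D)) (√(C + D * t))
  rw [sq_sqrt hx.le, sq_sqrt hu] at tx
  rw [sq_sqrt hy.le, sq_sqrt hv] at ty
  refine le_of_mul_le_mul_left ?_ (mul_pos hsx hsy)
  nlinarith [mul_le_mul_of_nonneg_left tx hsy.le, mul_le_mul_of_nonneg_left ty hsx.le,
    mul_nonneg (sub_nonneg.2 ht) hslope, sq_sqrt hx.le, sq_sqrt hy.le]

theorem ContinuousLinearMap.norm_eq_sum_norm_of_apply_eq {𝕜 ι : Type*} [RCLike 𝕜]
    [Fintype ι] (f : (ι → 𝕜) →L[𝕜] 𝕜) (α : ι → 𝕜) (hf : ∀ w, f w = ∑ i, α i * w i) :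
    ‖f‖ = ∑ i, ‖α i‖ := by
  refine le_antisymm (f.opNorm_le_bound (by positivity) fun w => ?_) ?_
  · rw [hf, Finset.sum_mul]
    refine (norm_sum_le _ _).trans (Finset.sum_le_sum fun i _ => ?_)
    rw [norm_mul]
    exact mul_le_mul_of_nonneg_left (norm_le_pi_norm w i) (norm_nonneg _)
  · set w : ι → 𝕜 := fun i => conj (α i) / ‖α i‖
    have hw : ‖w‖ ≤ 1 := (pi_norm_le_iff_of_nonneg zero_le_one).2 fun i => by
      simp only [w, norm_div, RCLike.norm_conj, RCLike.norm_ofReal, abs_norm]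
      exact div_self_le_one _
    have hfw : f w = ((∑ i, ‖α i‖ : ℝ) : 𝕜) := by
      rw [hf, RCLike.ofReal_sum]
      refine Finset.sum_congr rfl fun i _ => ?_
      rcases eq_or_ne (α i) 0 with h | h
      · simp [h]
      · rw [mul_div_assoc', RCLike.mul_conj, sq,
          mul_div_cancel_right₀ _ (RCLike.ofReal_ne_zero.2 (norm_ne_zero_iff.2 h))]
    calc ∑ i, ‖α i‖ = ‖f w‖ := by
          rw [hfw, RCLike.norm_ofReal, abs_of_nonneg (by positivity)]
      _ ≤ ‖f‖ := f.unit_le_opNorm w hw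

theorem norm_sq_ofReal_mul_add_ofReal_mul (a b : ℝ) (u v : ℂ) :
    ‖(a : ℂ) * u + b * v‖ ^ 2
      = a ^ 2 * ‖u‖ ^ 2 + b ^ 2 * ‖v‖ ^ 2 + 2 * a * b * (u * conj v).re := by
  have hcross : (a : ℂ) * u * conj (b * v) = ((a * b : ℝ) : ℂ) * (u * conj v) := by
    rw [map_mul, Complex.conj_ofReal]; push_cast; ring
  rw [Complex.sq_norm, Complex.normSq_add, hcross, Complex.re_ofReal_mul, Complex.normSq_mul,
    Complex.normSq_mul, Complex.normSq_ofReal, Complex.normSq_ofReal, ← Complex.sq_norm,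
    ← Complex.sq_norm]
  ring

theorem re_mul_conj_mem_Icc {u v : ℂ} (hu : ‖u‖ ≤ 1) (hv : ‖v‖ ≤ 1) :
    (u * conj v).re ∈ Icc (-1) 1 := by
  refine abs_le.1 ((Complex.abs_re_le_norm _).trans ?_)
  rw [norm_mul, Complex.norm_conj]
  exact mul_le_one₀ hu (norm_nonneg v) hv

/-- `sqrtQuad a b (u * conj v).re = ‖a u + b v‖` for unimodular `u, v`. -/
noncomputable def sqrtQuad (a b t : ℝ) : ℝ := √(a ^ 2 + b ^ 2 + 2 * a * b * t)

theorem norm_ofReal_mul_add_ofReal_mul_le_sqrtQuad (a b : ℝ) {u v : ℂ} (hu : ‖u‖ ≤ 1)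
    (hv : ‖v‖ ≤ 1) : ‖(a : ℂ) * u + b * v‖ ≤ sqrtQuad a b (u * conj v).re := by
  rw [sqrtQuad, ← abs_norm]
  refine abs_le_sqrt ?_
  rw [norm_sq_ofReal_mul_add_ofReal_mul]
  have hu2 : ‖u‖ ^ 2 ≤ 1 := pow_le_one₀ (norm_nonneg u) hu
  have hv2 : ‖v‖ ^ 2 ≤ 1 := pow_le_one₀ (norm_nonneg v) hv
  nlinarith [mul_le_mul_of_nonneg_left hu2 (sq_nonneg a),
    mul_le_mul_of_nonneg_left hv2 (sq_nonneg b)]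

theorem sq_add_sq_add_two_mul_mul_nonneg {a b t : ℝ} (ht : t ∈ Icc (-1) 1) :
    0 ≤ a ^ 2 + b ^ 2 + 2 * a * b * t := by
  obtain ⟨h1, h2⟩ := ht
  nlinarith [mul_nonneg (sub_nonneg.2 h2) (sq_nonneg (a - b)),
    mul_nonneg (neg_le_iff_add_nonneg.1 h1) (sq_nonneg (a + b))]

theorem sqrtQuad_one (a b : ℝ) : sqrtQuad a b 1 = |a + b| := by
  rw [sqrtQuad, ← sqrt_sq_eq_abs]; ring_nf

theorem sqrtQuad_neg_one (a b : ℝ) : sqrtQuad a b (-1) = |a - b| := by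
  rw [sqrtQuad, ← sqrt_sq_eq_abs]; ring_nf

theorem sqrtQuad_neg_neg (a b t : ℝ) : sqrtQuad a (-b) (-t) = sqrtQuad a b t := by
  rw [sqrtQuad, sqrtQuad]; ring_nf

theorem sqrtQuad_le_of_mul_nonneg {a b t : ℝ} (hab : 0 ≤ a * b) (ht : t ≤ 1) :
    sqrtQuad a b t ≤ |a + b| := by
  rw [← sqrtQuad_one]
  exact sqrt_le_sqrt (by nlinarith)

theorem sqrtQuad_le_of_mul_nonpos {a b t : ℝ} (hab : a * b ≤ 0) (ht : -1 ≤ t) :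
    sqrtQuad a b t ≤ |a - b| := by
  rw [← sqrtQuad_neg_one]
  exact sqrt_le_sqrt (by nlinarith)

theorem sqrtQuad_add_sqrtQuad_le_of_sq_lt {a b c d t : ℝ} (ht : t ∈ Icc (-1) 1)
    (hab : 0 < a * b) (h : (c * d) ^ 2 * (a + b) ^ 2 < (a * b) ^ 2 * (c + d) ^ 2) :
    sqrtQuad a b t + sqrtQuad c d t ≤ |a + b| + |c + d| := by
  have hx : 0 < a ^ 2 + b ^ 2 + 2 * a * b := by nlinarith [sq_nonneg (a - b)]
  have hy : 0 < c ^ 2 + d ^ 2 + 2 * c * d := by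
    have : 0 < (c + d) ^ 2 := pos_of_mul_pos_right (h.trans_le' (by positivity)) (sq_nonneg _)
    linarith
  have hslope := mul_sqrt_add_mul_sqrt_nonneg (by linarith : 0 ≤ 2 * a * b)
    (x := a ^ 2 + b ^ 2 + 2 * a * b) (y := c ^ 2 + d ^ 2 + 2 * c * d) (D := 2 * c * d)
    (by nlinarith)
  rw [← sqrtQuad_one, ← sqrtQuad_one]
  simpa only [sqrtQuad, mul_one] using
    sqrt_add_sqrt_le_of_slope_nonneg ht.2 (sq_add_sq_add_two_mul_mul_nonneg ht)
      (sq_add_sq_add_two_mul_mul_nonneg ht) hx hy hslope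

theorem sqrtQuad_add_sqrtQuad_le_max_of_mul_pos_of_mul_neg {a b c d t : ℝ}
    (ht : t ∈ Icc (-1) 1) (hab : 0 < a * b) (hcd : c * d < 0)
    (h : |2 * (a * b) * (c * d) * (c * d - a * b)|
      < |(a * b) ^ 2 * (c ^ 2 + d ^ 2) - (a ^ 2 + b ^ 2) * (c * d) ^ 2|) :
    sqrtQuad a b t + sqrtQuad c d t ≤ max (|a + b| + |c + d|) (|a - b| + |c - d|) := by
  set X := (a * b) ^ 2 * (c ^ 2 + d ^ 2) - (a ^ 2 + b ^ 2) * (c * d) ^ 2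
  set Y := 2 * (a * b) * (c * d) * (c * d - a * b)
  -- for `f = sqrtQuad a b + sqrtQuad c d`: `f' 1 ≥ 0 ↔ Y ≤ X` and `f' (-1) ≤ 0 ↔ Y ≤ -X`
  rcases le_or_gt 0 X with hX | hX
  · have hXY : Y < X := (le_abs_self Y).trans_lt (h.trans_eq (abs_of_nonneg hX))
    have hsq : (c * d) ^ 2 * (a + b) ^ 2 < (a * b) ^ 2 * (c + d) ^ 2 := by
      linear_combination hXY
    exact (sqrtQuad_add_sqrtQuad_le_of_sq_lt ht hab hsq).trans (le_max_left _ _)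
  · have hXY : Y < -X := (le_abs_self Y).trans_lt (h.trans_eq (abs_of_neg hX))
    have hsq : (a * -b) ^ 2 * (c + -d) ^ 2 < (c * -d) ^ 2 * (a + -b) ^ 2 := by
      linear_combination hXY
    have hmin := sqrtQuad_add_sqrtQuad_le_of_sq_lt (t := -t)
      ⟨neg_le_neg ht.2, by linarith [ht.1]⟩ (by linarith) hsq
    rw [sqrtQuad_neg_neg, sqrtQuad_neg_neg, ← sub_eq_add_neg, ← sub_eq_add_neg, add_comm,
      add_comm |c - d|] at hmin
    exact hmin.trans (le_max_right _ _)

/-- Condition (A) of the paper. -/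
def CaseA (a11 a12 a21 a22 : ℝ) : Prop :=
  a11 ≠ 0 ∧ a21 ≠ 0 ∧ a12 ≠ 0 ∧ a22 ≠ 0 ∧ a11 * a21 / (a12 * a22) < 0
    ∧ |a11 ^ 2 * a21 ^ 2 / (a12 ^ 2 * a22 ^ 2) * (a12 ^ 2 + a22 ^ 2) - (a11 ^ 2 + a21 ^ 2)|
      ≤ |2 * a11 * a21 * (1 - a11 * a21 / (a12 * a22))|

theorem abs_lt_abs_of_not_caseA {a11 a12 a21 a22 : ℝ} (h : ¬ CaseA a11 a12 a21 a22)
    (hpq : a11 * a21 * (a12 * a22) < 0) :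
    |2 * (a11 * a21) * (a12 * a22) * (a12 * a22 - a11 * a21)|
      < |(a11 * a21) ^ 2 * (a12 ^ 2 + a22 ^ 2) - (a11 ^ 2 + a21 ^ 2) * (a12 * a22) ^ 2| := by
  have hp : a11 * a21 ≠ 0 := left_ne_zero_of_mul hpq.ne
  have hq : a12 * a22 ≠ 0 := right_ne_zero_of_mul hpq.ne
  have h12 : a12 ≠ 0 := left_ne_zero_of_mul hq
  have h22 : a22 ≠ 0 := right_ne_zero_of_mul hq
  have hq2 : 0 < (a12 * a22) ^ 2 := by positivity
  simp only [CaseA, not_and, not_le] at h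
  have key := h (left_ne_zero_of_mul hp) (right_ne_zero_of_mul hp) h12 h22
    (div_neg_iff.2 (mul_neg_iff.1 hpq))
  have eY : 2 * a11 * a21 * (1 - a11 * a21 / (a12 * a22))
      = 2 * (a11 * a21) * (a12 * a22) * (a12 * a22 - a11 * a21) / (a12 * a22) ^ 2 := by
    field_simp
  have eX : a11 ^ 2 * a21 ^ 2 / (a12 ^ 2 * a22 ^ 2) * (a12 ^ 2 + a22 ^ 2) - (a11 ^ 2 + a21 ^ 2)
      = ((a11 * a21) ^ 2 * (a12 ^ 2 + a22 ^ 2) - (a11 ^ 2 + a21 ^ 2) * (a12 * a22) ^ 2)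
        / (a12 * a22) ^ 2 := by
    field_simp
  rwa [eX, eY, abs_div, abs_div, abs_of_pos hq2, div_lt_div_iff_of_pos_right hq2] at key

theorem sqrtQuad_add_sqrtQuad_le_max {a11 a12 a21 a22 t : ℝ} (h : ¬ CaseA a11 a12 a21 a22)
    (ht : t ∈ Icc (-1) 1) :
    sqrtQuad a11 a21 t + sqrtQuad a12 a22 t
      ≤ max (|a11 + a21| + |a12 + a22|) (|a11 - a21| + |a12 - a22|) := by
  by_cases hpq : a11 * a21 * (a12 * a22) < 0
  · have hXY := abs_lt_abs_of_not_caseA h hpq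
    rcases mul_neg_iff.1 hpq with ⟨hp, hq⟩ | ⟨hp, hq⟩
    · exact sqrtQuad_add_sqrtQuad_le_max_of_mul_pos_of_mul_neg ht hp hq hXY
    · have hswap := sqrtQuad_add_sqrtQuad_le_max_of_mul_pos_of_mul_neg ht hq hp
        (by convert hXY using 1 <;> rw [← abs_neg] <;> ring_nf)
      rwa [add_comm, add_comm |a12 + a22|, add_comm |a12 - a22|] at hswap
  · rcases mul_nonneg_iff.1 (not_lt.1 hpq) with ⟨hp, hq⟩ | ⟨hp, hq⟩
    · exact (add_le_add (sqrtQuad_le_of_mul_nonneg hp ht.2)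
        (sqrtQuad_le_of_mul_nonneg hq ht.2)).trans (le_max_left _ _)
    · exact (add_le_add (sqrtQuad_le_of_mul_nonpos hp ht.1)
        (sqrtQuad_le_of_mul_nonpos hq ht.1)).trans (le_max_right _ _)

/-- Part (B) of the norm formula for complex bilinear forms on `ℓ∞²(ℂ)` with real
coefficients: when the conditions of part (A) do not all hold, the norm is the same
expression as in the real case. -/
theorem norm_bilinear_form_linf2_complex_caseB
    (a11 a12 a21 a22 : ℝ)
    (T : (Fin 2 → ℂ) →L[ℂ] (Fin 2 → ℂ) →L[ℂ] ℂ)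
    (hT : ∀ z w : Fin 2 → ℂ,
      T z w = (a11 : ℂ) * z 0 * w 0 + (a21 : ℂ) * z 1 * w 0
        + (a12 : ℂ) * z 0 * w 1 + (a22 : ℂ) * z 1 * w 1)
    (h : ¬ (a11 ≠ 0 ∧ a21 ≠ 0 ∧ a12 ≠ 0 ∧ a22 ≠ 0
        ∧ a11 * a21 / (a12 * a22) < 0
        ∧ |a11 ^ 2 * a21 ^ 2 / (a12 ^ 2 * a22 ^ 2) * (a12 ^ 2 + a22 ^ 2)
            - (a11 ^ 2 + a21 ^ 2)|
          ≤ |2 * a11 * a21 * (1 - a11 * a21 / (a12 * a22))|)) :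
    ‖T‖ = max (|a11 + a21| + |a12 + a22|) (|a11 - a21| + |a12 - a22|) := by
  have hTz : ∀ z, ‖T z‖ = ‖(a11 : ℂ) * z 0 + a21 * z 1‖ + ‖(a12 : ℂ) * z 0 + a22 * z 1‖ :=
    fun z => by
      rw [(T z).norm_eq_sum_norm_of_apply_eq ![(a11 : ℂ) * z 0 + a21 * z 1,
        (a12 : ℂ) * z 0 + a22 * z 1] fun w => by
          rw [hT, Fin.sum_univ_two]
          simp only [Matrix.cons_val_zero, Matrix.cons_val_one]
          ring,
        Fin.sum_univ_two]
      simp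
  refine le_antisymm (T.opNorm_le_of_unit_norm (by positivity) fun z hz => ?_) (max_le ?_ ?_)
  · have hz0 : ‖z 0‖ ≤ 1 := hz ▸ norm_le_pi_norm z 0
    have hz1 : ‖z 1‖ ≤ 1 := hz ▸ norm_le_pi_norm z 1
    rw [hTz]
    exact (add_le_add (norm_ofReal_mul_add_ofReal_mul_le_sqrtQuad a11 a21 hz0 hz1)
      (norm_ofReal_mul_add_ofReal_mul_le_sqrtQuad a12 a22 hz0 hz1)).trans
      (sqrtQuad_add_sqrtQuad_le_max h (re_mul_conj_mem_Icc hz0 hz1))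
  · simpa [hTz, ← Complex.ofReal_add, Complex.norm_real] using
      T.unit_le_opNorm ![1, 1] (by simp [pi_norm_le_iff_of_nonneg])
  · simpa [hTz, ← sub_eq_add_neg, ← Complex.ofReal_sub, Complex.norm_real] using
      T.unit_le_opNorm ![1, -1] (by simp [pi_norm_le_iff_of_nonneg])
end

section
/- Let T : ℓ∞²(ℂ) × ℓ∞²(ℂ) → ℂ be the bilinear form T(z,w) = Σ_{i,j=1}^{2} a_{ij}z_iw_j with real coefficients a_{ij}. If a₁₁a₂₁ < 0 and a₁₂a₂₂ < 0, then (Σ_{i,j=1}^{2} |a_{ij}|^{4/3})^{3/4} ≤ ‖T‖. -/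
/-!
The signs of `a₁₁, a₂₁` are opposite, and so are those of `a₁₂, a₂₂`. Hence at the unit vectors
`z = (1, -1)` and `w = (sign a₁₁, sign a₁₂)` every term `a_ij z_i w_j` equals `|a_ij|`, so
`‖T‖ ≥ ∑ |a_ij|`, and the `ℓ^{4/3}` norm of the coefficients is dominated by their `ℓ¹` norm.
-/

open Finset

namespace Real

theorem sum_rpow_le_rpow_sum {ι : Type*} (s : Finset ι) {f : ι → ℝ}
    (hf : ∀ i ∈ s, 0 ≤ f i) {p : ℝ} (hp : 1 ≤ p) :
    ∑ i ∈ s, f i ^ p ≤ (∑ i ∈ s, f i) ^ p := by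
  induction s using Finset.cons_induction with
  | empty => simp [zero_rpow (by linarith : p ≠ 0)]
  | cons a s _ ih =>
    rw [forall_mem_cons] at hf
    rw [sum_cons, sum_cons]
    calc f a ^ p + ∑ i ∈ s, f i ^ p ≤ f a ^ p + (∑ i ∈ s, f i) ^ p := by
          gcongr; exact ih hf.2
      _ ≤ (f a + ∑ i ∈ s, f i) ^ p := add_rpow_le_rpow_add hf.1 (sum_nonneg hf.2) hp

theorem rpow_sum_rpow_inv_le_sum {ι : Type*} (s : Finset ι) {f : ι → ℝ}
    (hf : ∀ i ∈ s, 0 ≤ f i) {p : ℝ} (hp : 1 ≤ p) :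
    (∑ i ∈ s, f i ^ p) ^ p⁻¹ ≤ ∑ i ∈ s, f i := by
  calc (∑ i ∈ s, f i ^ p) ^ p⁻¹ ≤ ((∑ i ∈ s, f i) ^ p) ^ p⁻¹ := by
        gcongr
        · exact sum_nonneg fun i hi => rpow_nonneg (hf i hi) p
        · exact sum_rpow_le_rpow_sum s hf hp
    _ = ∑ i ∈ s, f i := rpow_rpow_inv (sum_nonneg hf) (by linarith)

end Real

section SignType

variable {α : Type*} [Ring α] [LinearOrder α] [IsStrictOrderedRing α]

theorem sign_eq_neg_sign_of_mul_neg {a b : α} (h : a * b < 0) :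
    SignType.sign b = -SignType.sign a := by
  rcases mul_neg_iff.mp h with ⟨ha, hb⟩ | ⟨ha, hb⟩ <;> simp [sign_pos, sign_neg, ha, hb]

theorem SignType.abs_coe_le_one (s : SignType) : |(s : α)| ≤ 1 := by
  cases s <;> simp

end SignType

/-- Case (3) of Theorem 5.1: if `a₁₁a₂₁ < 0` and `a₁₂a₂₂ < 0`, then the complex bilinear form with real coefficients satisfies Littlewood's 4/3 inequality with constant 1. -/
theorem littlewood_43_linf2_complex_case3
    (a11 a12 a21 a22 : ℝ)
    (T : (Fin 2 → ℂ) →L[ℂ] (Fin 2 → ℂ) →L[ℂ] ℂ)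
    (hT : ∀ z w : Fin 2 → ℂ,
      T z w = (a11 : ℂ) * z 0 * w 0 + (a21 : ℂ) * z 1 * w 0
        + (a12 : ℂ) * z 0 * w 1 + (a22 : ℂ) * z 1 * w 1)
    (h1 : a11 * a21 < 0) (h2 : a12 * a22 < 0) :
    (|a11| ^ ((4 : ℝ) / 3) + |a12| ^ ((4 : ℝ) / 3)
        + |a21| ^ ((4 : ℝ) / 3) + |a22| ^ ((4 : ℝ) / 3)) ^ ((3 : ℝ) / 4)
      ≤ ‖T‖ := by
  set z : Fin 2 → ℂ := ![1, -1]
  set w : Fin 2 → ℂ := ![((SignType.sign a11 : ℝ) : ℂ), ((SignType.sign a12 : ℝ) : ℂ)]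
  have hz : ‖z‖ ≤ 1 := (pi_norm_le_iff_of_nonneg zero_le_one).2 <| by
    simp [z, Fin.forall_fin_two]
  have hw : ‖w‖ ≤ 1 := (pi_norm_le_iff_of_nonneg zero_le_one).2 <| by
    simp [w, Fin.forall_fin_two, Complex.norm_real, SignType.abs_coe_le_one]
  have hTzw : T z w = ((|a11| + |a12| + |a21| + |a22| : ℝ) : ℂ) := by
    rw [hT, ← self_mul_sign a11, ← self_mul_sign a12, ← self_mul_sign a21, ← self_mul_sign a22,
      sign_eq_neg_sign_of_mul_neg h1, sign_eq_neg_sign_of_mul_neg h2]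
    simp only [z, w, Matrix.cons_val_zero, Matrix.cons_val_one]
    push_cast
    ring
  calc _ ≤ |a11| + |a12| + |a21| + |a22| := by
        simpa [Fin.sum_univ_four, show ((4 : ℝ) / 3)⁻¹ = 3 / 4 by norm_num] using
          Real.rpow_sum_rpow_inv_le_sum univ (f := ![|a11|, |a12|, |a21|, |a22|])
            (fun i _ => by fin_cases i <;> simp) (p := 4 / 3) (by norm_num)
    _ = ‖T z w‖ := by rw [hTzw, Complex.norm_real, Real.norm_of_nonneg (by positivity)]
    _ ≤ ‖T‖ := by simpa using T.le_of_opNorm₂_le_of_le le_rfl hz hw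
end
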